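/- There is a constant C depending only on the dimension n and the mollifier φ such that for all locally finite positive Borel measures σ, ω on ℝ^n: sup_{0<ε<1/8} A₂(σ_{8ε}, ω_ε) ≤ C · A₂(σ,ω), where σ_{8ε} = σ ∗ φ_{8ε} and ω_ε = ω ∗ φ_ε. -/

import Mathlib

open MeasureTheory Set Filter
open scoped ENNReal NNReal

noncomputable section

/-- An axis-parallel half-open cube in `ℝⁿ`, given by its lower corner and (positive)
side length. -/
structure Cube (n : ℕ) where
  corner : Fin n → ℝ
  side : ℝ
  side_pos : 0 < side

namespace Cube

variable {n : ℕ}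

/-- The underlying (half-open) set of the cube. -/
def toSet (Q : Cube n) : Set (Fin n → ℝ) :=
  {x | ∀ i, Q.corner i ≤ x i ∧ x i < Q.corner i + Q.side}

/-- The concentric dilate `ΓQ` of the cube `Q` (same center, side length `Γ·ℓ(Q)`),
as a set. -/
def dilate (Q : Cube n) (Γ : ℝ) : Set (Fin n → ℝ) :=
  {x | ∀ i, Q.corner i - (Γ - 1) * Q.side / 2 ≤ x i ∧
       x i < Q.corner i + Q.side + (Γ - 1) * Q.side / 2}

/-- Membership in `𝒫ⁿ`: the side length is an integral power of `2`. -/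
def memP (Q : Cube n) : Prop := ∃ ℓ : ℤ, Q.side = (2:ℝ) ^ ℓ

end Cube

/-- The translation applied at scale `2^ℓ` in the random dyadic grid determined by `β`:
`Σ_{j : 2^{-j} < 2^ℓ} 2^{-j} β_j`. -/
def gridShift {n : ℕ} (β : ℤ → Fin n → Bool) (ℓ : ℤ) (i : Fin n) : ℝ :=
  ∑' j : ℤ, if (2:ℝ) ^ (-j) < (2:ℝ) ^ ℓ ∧ β j i = true then (2:ℝ) ^ (-j) else 0

/-- Membership in the shifted dyadic grid `𝒟^β`. -/
def memGrid {n : ℕ} (β : ℤ → Fin n → Bool) (Q : Cube n) : Prop :=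
  ∃ (ℓ : ℤ) (k : Fin n → ℤ), Q.side = (2:ℝ) ^ ℓ ∧
    ∀ i, Q.corner i = (2:ℝ) ^ ℓ * (k i : ℝ) + gridShift β ℓ i

/-- The Hardy–Littlewood maximal function of a measure, over cubes in `𝒫ⁿ`. -/
def maximal {n : ℕ} (μ : Measure (Fin n → ℝ)) (x : Fin n → ℝ) : ℝ≥0∞ :=
  ⨆ (Q : Cube n) (_ : Q.memP) (_ : x ∈ Q.toSet), μ Q.toSet / volume Q.toSet

/-- The dyadic maximal function relative to the grid `𝒟^β`. -/
def dyadicMaximal {n : ℕ} (β : ℤ → Fin n → Bool) (μ : Measure (Fin n → ℝ))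
    (x : Fin n → ℝ) : ℝ≥0∞ :=
  ⨆ (Q : Cube n) (_ : memGrid β Q) (_ : x ∈ Q.toSet), μ Q.toSet / volume Q.toSet

/-- The two-weight Muckenhoupt constant `A₂(σ,ω)`. -/
def A2 {n : ℕ} (σ ω : Measure (Fin n → ℝ)) : ℝ≥0∞ :=
  ⨆ (Q : Cube n) (_ : Q.memP), (σ Q.toSet / volume Q.toSet) * (ω Q.toSet / volume Q.toSet)

/-- The operator norm `𝔑_M(σ,ω)` of the maximal function from `L²(σ)` to `L²(ω)`:
the least `N` with `∫ M(fσ)² dω ≤ N² ∫ f² dσ` for all (nonnegative) `f`. -/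
def opNorm {n : ℕ} (σ ω : Measure (Fin n → ℝ)) : ℝ≥0∞ :=
  sInf {N : ℝ≥0∞ | ∀ f : (Fin n → ℝ) → ℝ≥0∞, Measurable f →
    ∫⁻ x, (maximal (σ.withDensity f) x) ^ 2 ∂ω ≤ N ^ 2 * ∫⁻ x, (f x) ^ 2 ∂σ}

/-- `φ` is an admissible mollifier on `ℝⁿ`: smooth, `0 ≤ φ ≤ 1`, supported in `(−1,1)ⁿ`,
at least `2^{−n}` on `(−5/8,5/8)ⁿ`, with `∫ φ = 1`. -/
def IsAdmissibleMollifier {n : ℕ} (φ : (Fin n → ℝ) → ℝ) : Prop :=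
  ContDiff ℝ (⊤ : ℕ∞) φ ∧
  (∀ x, φ x ∈ Set.Icc (0:ℝ) 1) ∧
  (∀ x, φ x ≠ 0 → ∀ i, |x i| < 1) ∧
  (∀ x : Fin n → ℝ, (∀ i, |x i| < 5/8) → (2:ℝ) ^ (-(n:ℤ)) ≤ φ x) ∧
  (∫ x, φ x) = 1

/-- The mollification `ν_δ = ν ∗ φ_δ` of a measure `ν`, where `φ_δ(x) = δ^{−n} φ(x/δ)`:
the measure with density `x ↦ ∫ φ_δ(x−y) dν(y)` with respect to Lebesgue measure. -/
def mollify {n : ℕ} (φ : (Fin n → ℝ) → ℝ) (δ : ℝ) (ν : Measure (Fin n → ℝ)) :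
    Measure (Fin n → ℝ) :=
  volume.withDensity fun x => ∫⁻ y, ENNReal.ofReal ((δ ^ n)⁻¹ * φ (δ⁻¹ • (x - y))) ∂ν


/-!
Fix `ε` and a cube `Q`, and let `Q'` be a dyadic-power cube of side at most `64 max(ℓ(Q), ε)`
containing the `8ε`-neighbourhood of `Q`. For `ε ≤ δ ≤ 8ε` the mass `ν_δ(Q)` is bounded in two
ways: by `δ⁻ⁿ ν(Q') |Q|`, since `φ_δ ≤ δ⁻ⁿ` is supported in the `δ`-cube around `0` (efficient
when `ℓ(Q) ≤ ε`), and by `ν(Q')`, since `∫ φ_δ = 1` (efficient when `ℓ(Q) > ε`). Either way the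
average of `ν_δ` over `Q` is at most `64ⁿ` times the average of `ν` over `Q'`. The same `Q'` serves
both `σ_{8ε}` and `ω_ε`, so each term of `A₂(σ_{8ε}, ω_ε)` is at most `64²ⁿ A₂(σ, ω)`.
-/

namespace Cube

variable {n : ℕ}

theorem toSet_eq_pi (Q : Cube n) :
    Q.toSet = Set.pi univ fun i => Ico (Q.corner i) (Q.corner i + Q.side) := by
  ext x; simp [toSet, Set.mem_pi]

theorem measurableSet_toSet (Q : Cube n) : MeasurableSet Q.toSet := by
  rw [toSet_eq_pi]; exact .univ_pi fun _ => measurableSet_Ico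

theorem volume_toSet (Q : Cube n) : volume Q.toSet = ENNReal.ofReal (Q.side ^ n) := by
  rw [toSet_eq_pi, Real.volume_pi_Ico, ENNReal.ofReal_pow Q.side_pos.le]
  simp

theorem volume_toSet_pos (Q : Cube n) : 0 < volume Q.toSet := by
  rw [volume_toSet]; exact ENNReal.ofReal_pos.2 (pow_pos Q.side_pos n)

theorem volume_toSet_ne_top (Q : Cube n) : volume Q.toSet ≠ ⊤ := by
  rw [volume_toSet]; exact ENNReal.ofReal_ne_top

theorem ball_subset_toSet {Q Q' : Cube n} {δ : ℝ} (hlo : ∀ i, Q'.corner i ≤ Q.corner i - δ)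
    (hhi : ∀ i, Q.corner i + Q.side + δ ≤ Q'.corner i + Q'.side) {x : Fin n → ℝ}
    (hx : x ∈ Q.toSet) : Metric.ball x δ ⊆ Q'.toSet := by
  intro y hy i
  have hyx : |y i - x i| < δ := (dist_le_pi_dist y x i).trans_lt hy
  obtain ⟨hx_lo, hx_hi⟩ := hx i
  constructor <;> linarith [abs_lt.1 hyx, hlo i, hhi i]

theorem exists_memP_ball_subset (Q : Cube n) {ε : ℝ} (hε : 0 < ε) :
    ∃ Q' : Cube n, Q'.memP ∧ Q'.side ≤ 64 * max Q.side ε ∧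
      ∀ δ ≤ 8 * ε, ∀ x ∈ Q.toSet, Metric.ball x δ ⊆ Q'.toSet := by
  set r := max Q.side ε
  have hr : 0 < r := lt_max_of_lt_right hε
  obtain ⟨k, hk_lo, hk_hi⟩ := exists_mem_Ico_zpow (by positivity : 0 < 32 * r) one_lt_two
  have hside : (2:ℝ) ^ (k + 1) = 2 * 2 ^ k := by rw [zpow_add_one₀ two_ne_zero, mul_comm]
  refine ⟨⟨fun i => Q.corner i - 8 * ε, 2 ^ (k + 1), zpow_pos two_pos _⟩, ⟨k + 1, rfl⟩,
    by dsimp only; linarith, fun δ hδ x hx => ball_subset_toSet (fun i => ?_) (fun i => ?_) hx⟩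
  · dsimp only; linarith
  · have : Q.side + 16 * ε ≤ 17 * r := by linarith [le_max_left Q.side ε, le_max_right Q.side ε]
    dsimp only; linarith

def average (Q : Cube n) (ν : Measure (Fin n → ℝ)) : ℝ≥0∞ := ν Q.toSet / volume Q.toSet

theorem measure_eq_volume_mul_average (Q : Cube n) (ν : Measure (Fin n → ℝ)) :
    ν Q.toSet = volume Q.toSet * Q.average ν :=
  (ENNReal.mul_div_cancel Q.volume_toSet_pos.ne' Q.volume_toSet_ne_top).symm

theorem average_mul_average_le_A2 {Q : Cube n} (hQ : Q.memP) (σ ω : Measure (Fin n → ℝ)) :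
    Q.average σ * Q.average ω ≤ A2 σ ω :=
  le_iSup₂ (f := fun (R : Cube n) (_ : R.memP) => R.average σ * R.average ω) Q hQ

end Cube

def mollifierKernel {n : ℕ} (φ : (Fin n → ℝ) → ℝ) (δ : ℝ) (x y : Fin n → ℝ) : ℝ≥0∞ :=
  ENNReal.ofReal ((δ ^ n)⁻¹ * φ (δ⁻¹ • (x - y)))

section Kernel

variable {n : ℕ} {φ : (Fin n → ℝ) → ℝ} {δ : ℝ}

theorem mollify_apply {S : Set (Fin n → ℝ)} (hS : MeasurableSet S) (ν : Measure (Fin n → ℝ)) :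
    mollify φ δ ν S = ∫⁻ x in S, ∫⁻ y, mollifierKernel φ δ x y ∂ν :=
  withDensity_apply _ hS

theorem measurable_mollifierKernel (hφ : Measurable φ) :
    Measurable (Function.uncurry (mollifierKernel φ δ)) := by
  unfold mollifierKernel; fun_prop

theorem mollifierKernel_le (hφ : ∀ x, φ x ≤ 1) (hδ : 0 < δ) (x y : Fin n → ℝ) :
    mollifierKernel φ δ x y ≤ ENNReal.ofReal (δ ^ n)⁻¹ :=
  ENNReal.ofReal_le_ofReal <| mul_le_of_le_one_right (by positivity) (hφ _)

theorem mollifierKernel_eq_zero_of_le_dist (hφ : ∀ x, φ x ≠ 0 → ‖x‖ < 1) (hδ : 0 < δ)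
    {x y : Fin n → ℝ} (hxy : δ ≤ dist x y) : mollifierKernel φ δ x y = 0 := by
  suffices φ (δ⁻¹ • (x - y)) = 0 by simp [mollifierKernel, this]
  by_contra h
  have := hφ _ h
  rw [norm_smul, Real.norm_of_nonneg (inv_nonneg.2 hδ.le), ← dist_eq_norm,
    inv_mul_lt_one₀ hδ] at this
  exact this.not_ge hxy

theorem mollifierKernel_eq_zero_of_notMem {T : Set (Fin n → ℝ)} (hφ : ∀ x, φ x ≠ 0 → ‖x‖ < 1)
    (hδ : 0 < δ) {x y : Fin n → ℝ} (hx : Metric.ball x δ ⊆ T) (hy : y ∉ T) :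
    mollifierKernel φ δ x y = 0 :=
  mollifierKernel_eq_zero_of_le_dist hφ hδ <| by
    rw [dist_comm]; exact not_lt.1 fun h => hy (hx (Metric.mem_ball.2 h))

theorem lintegral_mollifierKernel (hφ : ∀ x, 0 ≤ φ x) (hφ_int : ∫ x, φ x = 1) (hδ : 0 < δ)
    (y : Fin n → ℝ) : ∫⁻ x, mollifierKernel φ δ x y = 1 := by
  have hint : ∫ x, (δ ^ n)⁻¹ * φ (δ⁻¹ • (x - y)) = 1 := by
    rw [integral_const_mul, integral_sub_right_eq_self (fun x => φ (δ⁻¹ • x)),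
      Measure.integral_comp_inv_smul_of_nonneg _ _ hδ.le, Module.finrank_fin_fun, hφ_int,
      smul_eq_mul, mul_one, inv_mul_cancel₀ (pow_ne_zero _ hδ.ne')]
  simp_rw [mollifierKernel]
  rw [← ofReal_integral_eq_lintegral_ofReal, hint, ENNReal.ofReal_one]
  · exact Integrable.of_integral_ne_zero (by rw [hint]; exact one_ne_zero)
  · exact Eventually.of_forall fun x => mul_nonneg (by positivity) (hφ _)

end Kernel

section Bounds

variable {n : ℕ} {φ : (Fin n → ℝ) → ℝ} {δ : ℝ} {S T : Set (Fin n → ℝ)}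

theorem mollify_le_mul_volume (hφ_le : ∀ x, φ x ≤ 1) (hφ_supp : ∀ x, φ x ≠ 0 → ‖x‖ < 1)
    (hδ : 0 < δ) (hS : MeasurableSet S) (hST : ∀ x ∈ S, Metric.ball x δ ⊆ T)
    (ν : Measure (Fin n → ℝ)) :
    mollify φ δ ν S ≤ ENNReal.ofReal (δ ^ n)⁻¹ * ν T * volume S := by
  rw [mollify_apply hS, ← setLIntegral_const]
  refine setLIntegral_mono' hS fun x hx => ?_
  calc ∫⁻ y, mollifierKernel φ δ x y ∂ν
      ≤ ∫⁻ y, T.indicator (fun _ => ENNReal.ofReal (δ ^ n)⁻¹) y ∂ν := by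
        refine lintegral_mono fun y => ?_
        by_cases hy : y ∈ T
        · rw [indicator_of_mem hy]; exact mollifierKernel_le hφ_le hδ x y
        · rw [mollifierKernel_eq_zero_of_notMem hφ_supp hδ (hST x hx) hy]; exact zero_le
    _ ≤ ENNReal.ofReal (δ ^ n)⁻¹ * ν T := lintegral_indicator_const_le _ _

/-- By Tonelli, each `y ∈ T` contributes at most `∫ φ_δ(x - y) dx = 1`, and `y ∉ T` nothing. -/
theorem mollify_le_measure (hφ_meas : Measurable φ) (hφ_nonneg : ∀ x, 0 ≤ φ x)
    (hφ_int : ∫ x, φ x = 1) (hφ_supp : ∀ x, φ x ≠ 0 → ‖x‖ < 1) (hδ : 0 < δ)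
    (hS : MeasurableSet S) (hST : ∀ x ∈ S, Metric.ball x δ ⊆ T)
    (ν : Measure (Fin n → ℝ)) [SFinite ν] :
    mollify φ δ ν S ≤ ν T := by
  rw [mollify_apply hS, lintegral_lintegral_swap (measurable_mollifierKernel hφ_meas).aemeasurable]
  calc ∫⁻ y, ∫⁻ x in S, mollifierKernel φ δ x y ∂volume ∂ν
      ≤ ∫⁻ y, T.indicator 1 y ∂ν := by
        refine lintegral_mono fun y => ?_
        by_cases hy : y ∈ T
        · rw [indicator_of_mem hy, Pi.one_apply,
            ← lintegral_mollifierKernel hφ_nonneg hφ_int hδ y]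
          exact setLIntegral_le_lintegral _ _
        · rw [setLIntegral_congr_fun hS fun x hx =>
            mollifierKernel_eq_zero_of_notMem hφ_supp hδ (hST x hx) hy]
          simp
    _ ≤ ν T := lintegral_indicator_one_le T

end Bounds

namespace IsAdmissibleMollifier

variable {n : ℕ} {φ : (Fin n → ℝ) → ℝ}

theorem measurable (hφ : IsAdmissibleMollifier φ) : Measurable φ := hφ.1.continuous.measurable

theorem nonneg (hφ : IsAdmissibleMollifier φ) (x : Fin n → ℝ) : 0 ≤ φ x := (hφ.2.1 x).1

theorem le_one (hφ : IsAdmissibleMollifier φ) (x : Fin n → ℝ) : φ x ≤ 1 := (hφ.2.1 x).2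

theorem norm_lt_one_of_ne_zero (hφ : IsAdmissibleMollifier φ) {x : Fin n → ℝ} (hx : φ x ≠ 0) :
    ‖x‖ < 1 :=
  (pi_norm_lt_iff one_pos).2 fun i => by simpa only [Real.norm_eq_abs] using hφ.2.2.1 x hx i

theorem integral_eq_one (hφ : IsAdmissibleMollifier φ) : ∫ x, φ x = 1 := hφ.2.2.2.2

end IsAdmissibleMollifier

theorem Cube.exists_memP_average_mollify_le {n : ℕ} {φ : (Fin n → ℝ) → ℝ}
    (hφ : IsAdmissibleMollifier φ) (Q : Cube n) {ε : ℝ} (hε : 0 < ε) :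
    ∃ Q' : Cube n, Q'.memP ∧ ∀ (ν : Measure (Fin n → ℝ)) [SFinite ν], ∀ δ ∈ Icc ε (8 * ε),
      Q.average (mollify φ δ ν) ≤ 64 ^ n * Q'.average ν := by
  obtain ⟨Q', hQ', hside, hball⟩ := Q.exists_memP_ball_subset hε
  refine ⟨Q', hQ', fun ν _ δ ⟨hεδ, hδ8ε⟩ => ENNReal.div_le_of_le_mul ?_⟩
  have hδ : 0 < δ := hε.trans_le hεδ
  have hST := hball δ hδ8ε
  have h64 : ENNReal.ofReal (64 ^ n) = 64 ^ n := by
    rw [ENNReal.ofReal_pow (by norm_num), ENNReal.ofReal_ofNat]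
  rcases le_or_gt Q.side ε with hsmall | hbig
  · have hfactor : ENNReal.ofReal (δ ^ n)⁻¹ * volume Q'.toSet ≤ 64 ^ n := by
      rw [Q'.volume_toSet, ← ENNReal.ofReal_mul (by positivity), ← h64]
      refine ENNReal.ofReal_le_ofReal ?_
      rw [inv_mul_le_iff₀ (pow_pos hδ n), ← mul_pow]
      refine pow_le_pow_left₀ Q'.side_pos.le ?_ n
      linarith [max_eq_right hsmall]
    calc mollify φ δ ν Q.toSet
        ≤ ENNReal.ofReal (δ ^ n)⁻¹ * ν Q'.toSet * volume Q.toSet :=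
          mollify_le_mul_volume hφ.le_one (fun _ => hφ.norm_lt_one_of_ne_zero) hδ
            Q.measurableSet_toSet hST ν
      _ = ENNReal.ofReal (δ ^ n)⁻¹ * volume Q'.toSet * Q'.average ν * volume Q.toSet := by
          rw [Q'.measure_eq_volume_mul_average]; ring
      _ ≤ 64 ^ n * Q'.average ν * volume Q.toSet := by gcongr
  · have hvolume : volume Q'.toSet ≤ 64 ^ n * volume Q.toSet := by
      rw [Q'.volume_toSet, Q.volume_toSet, ← h64,
        ← ENNReal.ofReal_mul (by positivity), ← mul_pow]
      refine ENNReal.ofReal_le_ofReal (pow_le_pow_left₀ Q'.side_pos.le ?_ n)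
      linarith [max_eq_left hbig.le]
    calc mollify φ δ ν Q.toSet
        ≤ ν Q'.toSet :=
          mollify_le_measure hφ.measurable hφ.nonneg hφ.integral_eq_one
            (fun _ => hφ.norm_lt_one_of_ne_zero) hδ Q.measurableSet_toSet hST ν
      _ = volume Q'.toSet * Q'.average ν := Q'.measure_eq_volume_mul_average ν
      _ ≤ 64 ^ n * Q'.average ν * volume Q.toSet := by
          rw [mul_right_comm]; gcongr

/-- **Uniform `A₂` bound for mollified weights.** There is a constant `C` depending only
on the dimension `n` and the mollifier `φ` such that for all locally finite positive
Borel measures `σ, ω` on `ℝⁿ`: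
`sup_{0<ε<1/8} A₂(σ_{8ε}, ω_ε) ≤ C · A₂(σ,ω)`. -/
theorem mollified_A2_bound
    {n : ℕ} (φ : (Fin n → ℝ) → ℝ) (hφ : IsAdmissibleMollifier φ) :
    ∃ C : ℝ≥0∞, 0 < C ∧ C ≠ ⊤ ∧
      ∀ σ ω : Measure (Fin n → ℝ),
        IsLocallyFiniteMeasure σ → IsLocallyFiniteMeasure ω →
        (⨆ ε ∈ Set.Ioo (0:ℝ) (1/8), A2 (mollify φ (8 * ε) σ) (mollify φ ε ω))
          ≤ C * A2 σ ω := by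
  refine ⟨64 ^ (2 * n), by positivity, ENNReal.pow_ne_top (by norm_num),
    fun σ ω _ _ => iSup₂_le fun ε ⟨hε, _⟩ => iSup₂_le fun Q _ => ?_⟩
  obtain ⟨Q', hQ', hQQ'⟩ := Q.exists_memP_average_mollify_le hφ hε
  calc Q.average (mollify φ (8 * ε) σ) * Q.average (mollify φ ε ω)
      ≤ 64 ^ n * Q'.average σ * (64 ^ n * Q'.average ω) :=
        mul_le_mul' (hQQ' σ (8 * ε) ⟨by linarith, le_rfl⟩) (hQQ' ω ε ⟨le_rfl, by linarith⟩)
    _ = 64 ^ (2 * n) * (Q'.average σ * Q'.average ω) := by ring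
    _ ≤ 64 ^ (2 * n) * A2 σ ω := by gcongr; exact Cube.average_mul_average_le_A2 hQ' σ ω
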